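/- arXiv:0903.4321 — 3 statements merged into one kernel-verified Lean document; each statement's English description precedes it below -/
import Mathlib

section
/- For all integers n ≥ 1 and all real θ, 2^n cos^n(θ) sin(nθ) = Σ_{p=0}^{n} C(n,p) sin(2pθ). -/
open Real Finset

theorem stmt0 (n : ℕ) (hn : 1 ≤ n) (θ : ℝ) :
    2 ^ n * Real.cos θ ^ n * Real.sin (n * θ) =
      ∑ p ∈ Finset.range (n + 1), (n.choose p : ℝ) * Real.sin (2 * p * θ) := by
  have him : ∀ (r x : ℝ), ((r : ℂ) * Complex.exp ((x : ℂ) * Complex.I)).im = r * Real.sin x := by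
    intro r x
    rw [Complex.mul_im, Complex.exp_ofReal_mul_I_im]
    simp
  have key : ((2 : ℂ) * Complex.cos θ) ^ n * Complex.exp (n * θ * Complex.I) =
      ∑ p ∈ Finset.range (n + 1), (n.choose p : ℂ) * Complex.exp (2 * p * θ * Complex.I) := by
    rw [Complex.two_cos]
    have hn' : Complex.exp (↑n * ↑θ * Complex.I) = Complex.exp (θ * Complex.I) ^ n := by
      rw [← Complex.exp_nat_mul]; ring_nf
    rw [hn', ← mul_pow]
    have h1 : (Complex.exp (↑θ * Complex.I) + Complex.exp (-↑θ * Complex.I)) * Complex.exp (↑θ * Complex.I)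
        = Complex.exp (2 * θ * Complex.I) + 1 := by
      rw [add_mul, ← Complex.exp_add, ← Complex.exp_add,
        show (-↑θ * Complex.I + ↑θ * Complex.I : ℂ) = 0 by ring, Complex.exp_zero,
        show (↑θ * Complex.I + ↑θ * Complex.I : ℂ) = 2 * θ * Complex.I by ring]
    rw [h1, add_pow]
    refine Finset.sum_congr rfl fun p hp => ?_
    rw [one_pow, ← Complex.exp_nat_mul]
    ring_nf
  calc 2 ^ n * Real.cos θ ^ n * Real.sin (n * θ)
      = (((2 : ℂ) * Complex.cos θ) ^ n * Complex.exp (n * θ * Complex.I)).im := by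
        rw [show ((2:ℂ) * Complex.cos θ) = (((2 * Real.cos θ : ℝ) : ℝ) : ℂ) by
              push_cast [Complex.ofReal_cos]; ring,
            ← Complex.ofReal_pow,
            show ((n:ℂ) * θ * Complex.I) = (((n * θ : ℝ) : ℝ) : ℂ) * Complex.I by push_cast; ring,
            him]
        ring
    _ = ∑ p ∈ Finset.range (n + 1), (n.choose p : ℝ) * Real.sin (2 * p * θ) := by
        rw [key, Complex.im_sum]
        refine Finset.sum_congr rfl fun p hp => ?_
        rw [show ((n.choose p : ℂ)) = ((n.choose p : ℝ) : ℂ) by push_cast; ring,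
            show ((2:ℂ) * p * θ * Complex.I) = (((2 * p * θ : ℝ) : ℝ) : ℂ) * Complex.I by push_cast; ring,
            him]
end

section
/- For positive integers m and n, ∫_0^{π/2} cos^n(θ) sin(nθ) sin(2mθ) dθ = (π / 2^{n+2}) · C(n, m), where C(n,m) is the binomial coefficient (taken to be 0 when m > n). -/
open Real

lemma pointwise (n : ℕ) (θ : ℝ) :
    (2:ℝ)^n * (Real.cos θ ^ n * Real.sin (n*θ)) =
    ∑ j ∈ Finset.range (n+1), (n.choose j : ℝ) * Real.sin (2*j*θ) := by
  have h1 : ((2 * Real.cos θ : ℝ) : ℂ) * Complex.exp (θ * Complex.I)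
      = 1 + Complex.exp (θ * Complex.I)^2 := by
    have h2 : Complex.exp (θ * Complex.I)^2 = Complex.exp ((2*θ : ℝ) * Complex.I) := by
      rw [← Complex.exp_nat_mul]; push_cast; ring_nf
    rw [h2]
    have r1 := Complex.exp_ofReal_mul_I_re (2*θ)
    have i1 := Complex.exp_ofReal_mul_I_im (2*θ)
    have r0 := Complex.exp_ofReal_mul_I_re θ
    have i0 := Complex.exp_ofReal_mul_I_im θ
    apply Complex.ext <;>
      simp only [Complex.add_re, Complex.add_im, Complex.one_re, Complex.one_im,
        Complex.mul_re, Complex.mul_im, Complex.ofReal_re, Complex.ofReal_im, r1, i1, r0, i0]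
    · rw [Real.cos_two_mul]; ring
    · rw [Real.sin_two_mul]; ring
  have key : (((2:ℝ)^n * (Real.cos θ ^ n) : ℝ) : ℂ) * Complex.exp (θ * Complex.I)^n
      = ∑ j ∈ Finset.range (n+1), (n.choose j : ℂ) * Complex.exp ((2*j*θ : ℝ) * Complex.I) := by
    have e : (((2:ℝ)^n * (Real.cos θ ^ n) : ℝ) : ℂ) * Complex.exp (θ * Complex.I)^n
        = (((2 * Real.cos θ : ℝ) : ℂ) * Complex.exp (θ * Complex.I))^n := by
      push_cast; ring
    rw [e, h1, add_comm, add_pow]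
    refine Finset.sum_congr rfl fun j hj => ?_
    have e2 : (Complex.exp (θ * Complex.I)^2)^j = Complex.exp ((2*j*θ : ℝ) * Complex.I) := by
      rw [← pow_mul, ← Complex.exp_nat_mul]; push_cast; ring_nf
    rw [e2]; ring
  have him := congrArg Complex.im key
  rw [Complex.im_ofReal_mul, ← Complex.exp_nat_mul] at him
  have e3 : (Complex.exp ((n:ℂ) * (θ * Complex.I))).im = Real.sin (n * θ) := by
    have : (n:ℂ) * (θ * Complex.I) = ((n * θ : ℝ) : ℂ) * Complex.I := by push_cast; ring
    rw [this, Complex.exp_ofReal_mul_I_im]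
  rw [e3, Complex.im_sum] at him
  rw [← mul_assoc, him]
  refine Finset.sum_congr rfl fun j hj => ?_
  have : ((n.choose j : ℂ)) = ((n.choose j : ℝ) : ℂ) := by push_cast; ring
  rw [this, Complex.im_ofReal_mul, Complex.exp_ofReal_mul_I_im]

lemma cos_int_integral (k : ℤ) (hk : k ≠ 0) :
    ∫ θ in (0:ℝ)..(π/2), Real.cos (2*(k:ℝ)*θ) = 0 := by
  have hc : (2*(k:ℝ)) ≠ 0 := by
    simp [hk]
  have := intervalIntegral.integral_comp_mul_left (a := (0:ℝ)) (b := π/2)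
    (fun x => Real.cos x) hc
  simp only [mul_zero] at this
  calc ∫ θ in (0:ℝ)..(π/2), Real.cos (2*(k:ℝ)*θ)
      = (2*(k:ℝ))⁻¹ • ∫ x in (0:ℝ)..(2*(k:ℝ)*(π/2)), Real.cos x := this
    _ = 0 := by
        rw [integral_cos, Real.sin_zero]
        have : 2*(k:ℝ)*(π/2) = (k:ℝ)*π := by ring
        rw [this, Real.sin_int_mul_pi]
        simp

lemma orth (j m : ℕ) (hm : 1 ≤ m) :
    ∫ θ in (0:ℝ)..(π/2), Real.sin (2*(j:ℝ)*θ) * Real.sin (2*(m:ℝ)*θ) =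
      if j = m then π/4 else 0 := by
  have hpt : ∀ θ : ℝ, Real.sin (2*(j:ℝ)*θ) * Real.sin (2*(m:ℝ)*θ)
      = (Real.cos (2*(((j:ℤ)-(m:ℤ)):ℝ)*θ) - Real.cos (2*(((j:ℤ)+(m:ℤ)):ℝ)*θ)) / 2 := by
    intro θ
    have := Real.cos_sub_cos (2*(j:ℝ)*θ - 2*(m:ℝ)*θ) (2*(j:ℝ)*θ + 2*(m:ℝ)*θ)
    have e1 : (2*(j:ℝ)*θ - 2*(m:ℝ)*θ + (2*(j:ℝ)*θ + 2*(m:ℝ)*θ))/2 = 2*(j:ℝ)*θ := by ring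
    have e2 : (2*(j:ℝ)*θ - 2*(m:ℝ)*θ - (2*(j:ℝ)*θ + 2*(m:ℝ)*θ))/2 = -(2*(m:ℝ)*θ) := by ring
    rw [e1, e2, Real.sin_neg] at this
    push_cast
    rw [show 2*((j:ℝ)-(m:ℝ))*θ = 2*(j:ℝ)*θ - 2*(m:ℝ)*θ by ring,
        show 2*((j:ℝ)+(m:ℝ))*θ = 2*(j:ℝ)*θ + 2*(m:ℝ)*θ by ring]
    rw [this]; ring
  simp only [hpt]
  rw [intervalIntegral.integral_div]
  rw [intervalIntegral.integral_sub (by apply Continuous.intervalIntegrable; continuity)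
    (by apply Continuous.intervalIntegrable; continuity)]
  have h2 := cos_int_integral ((j:ℤ)+(m:ℤ)) (by omega)
  push_cast at h2 ⊢
  rw [h2]
  by_cases h : j = m
  · subst h
    simp only [sub_self, mul_zero, zero_mul, Real.cos_zero]
    rw [intervalIntegral.integral_const]
    simp
    ring
  · have h1 := cos_int_integral ((j:ℤ)-(m:ℤ)) (by
      intro hc; apply h; omega)
    push_cast at h1
    rw [h1]
    simp [h]

theorem stmt1 (m n : ℕ) (hm : 1 ≤ m) (hn : 1 ≤ n) :
    ∫ θ in (0:ℝ)..(π / 2), Real.cos θ ^ n * Real.sin (n * θ) * Real.sin (2 * m * θ) =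
      π / 2 ^ (n + 2) * (n.choose m : ℝ) := by
  have hpt : ∀ θ : ℝ, Real.cos θ ^ n * Real.sin (n * θ) * Real.sin (2 * m * θ)
      = ∑ j ∈ Finset.range (n+1),
          ((n.choose j : ℝ) / 2^n) * (Real.sin (2*j*θ) * Real.sin (2*m*θ)) := by
    intro θ
    have hp := pointwise n θ
    have h2 : Real.cos θ ^ n * Real.sin (n * θ)
        = (∑ j ∈ Finset.range (n+1), (n.choose j : ℝ) * Real.sin (2*j*θ)) / 2^n := by
      rw [eq_div_iff (by positivity : (2:ℝ)^n ≠ 0)]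
      rw [← hp]; ring
    rw [h2, div_mul_eq_mul_div, Finset.sum_mul, Finset.sum_div]
    refine Finset.sum_congr rfl fun j hj => ?_
    ring
  simp only [hpt]
  rw [intervalIntegral.integral_finset_sum
    (fun j hj => (by apply Continuous.intervalIntegrable; continuity :
      IntervalIntegrable (fun θ => ((n.choose j : ℝ) / 2^n) *
        (Real.sin (2*j*θ) * Real.sin (2*m*θ))) MeasureTheory.volume 0 (π/2)))]
  simp only [intervalIntegral.integral_const_mul]
  have : ∀ j ∈ Finset.range (n+1),
      ((n.choose j : ℝ) / 2^n) * ∫ θ in (0:ℝ)..(π/2), Real.sin (2*j*θ) * Real.sin (2*m*θ)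
      = if j = m then ((n.choose j : ℝ) / 2^n) * (π/4) else 0 := by
    intro j hj
    rw [orth j m hm]
    split <;> simp
  rw [Finset.sum_congr rfl this, Finset.sum_ite_eq' (Finset.range (n+1)) m
    (fun j => ((n.choose j : ℝ) / 2^n) * (π/4))]
  by_cases hmn : m ∈ Finset.range (n+1)
  · rw [if_pos hmn]
    rw [pow_add]
    ring
  · rw [if_neg hmn]
    have : n.choose m = 0 := Nat.choose_eq_zero_of_lt (by simpa using hmn)
    rw [this]
    simp
end

section
/- For integers n ≥ 0 and m ≥ 1, ∫_0^{π/2} cos^n(θ) cos((n+2)θ) cos(2mθ) dθ equals (π / 2^{n+2}) · C(n, m-1) if n > m - 2, and equals 0 if n ≤ m - 2. -/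
open Real

lemma L1 (c a b : ℝ) (hc : c ≠ 0) : ∫ x in a..b, Real.cos (c*x) = (Real.sin (c*b) - Real.sin (c*a))/c := by
  rw [intervalIntegral.integral_comp_mul_left _ hc, integral_cos]
  field_simp
  rw [smul_eq_mul, ← mul_assoc, mul_one_div_cancel hc, one_mul]

lemma Lsin (k : ℤ) (c : ℝ) (hck : c * (π/2) = k * π) : Real.sin (c * (π/2)) = 0 := by
  rw [hck]; exact Real.sin_int_mul_pi k

lemma L2 (a b : ℕ) (ha : 1 ≤ a) (hb : 1 ≤ b) :
    ∫ θ in (0:ℝ)..(π/2), Real.cos (2*a*θ) * Real.cos (2*b*θ) = if a = b then π/4 else 0 := by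
  have key : ∀ θ:ℝ, Real.cos (2*a*θ) * Real.cos (2*b*θ)
      = (Real.cos ((2*(a:ℝ)-2*b)*θ) + Real.cos ((2*(a:ℝ)+2*b)*θ))/2 := by
    intro θ
    rw [sub_mul, add_mul, Real.cos_sub, Real.cos_add]
    ring
  simp_rw [key]
  have hint : ∀ c:ℝ, IntervalIntegrable (fun θ => Real.cos (c*θ)) MeasureTheory.volume 0 (π/2) := by
    intro c
    exact (Real.continuous_cos.comp (continuous_const.mul continuous_id)).intervalIntegrable _ _
  rw [intervalIntegral.integral_div, intervalIntegral.integral_add (hint _) (hint _)]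
  have h2 : (∫ θ in (0:ℝ)..(π/2), Real.cos ((2*(a:ℝ)+2*b)*θ)) = 0 := by
    rw [L1 _ _ _ (by positivity)]
    rw [Lsin ((a:ℤ)+b) _ (by push_cast; ring)]
    simp
  rcases eq_or_ne a b with h | h
  · subst h
    simp only [sub_self, zero_mul, Real.cos_zero, if_pos rfl]
    rw [intervalIntegral.integral_const, h2]
    simp
    ring
  · have hab : (2*(a:ℝ)-2*b) ≠ 0 := by
      intro hc
      apply h
      have : (a:ℝ) = b := by linarith
      exact_mod_cast this
    have h1 : (∫ θ in (0:ℝ)..(π/2), Real.cos ((2*(a:ℝ)-2*b)*θ)) = 0 := by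
      rw [L1 _ _ _ hab]
      rw [Lsin ((a:ℤ)-b) _ (by push_cast; ring)]
      simp
    rw [if_neg h, h1, h2]
    simp

lemma L3 (n : ℕ) (θ : ℝ) :
    (2:ℝ)^n * (Real.cos θ ^ n * Real.cos ((n + 2) * θ))
      = ∑ k ∈ Finset.range (n+1), (n.choose k : ℝ) * Real.cos (2*(k+1) * θ) := by
  set z : ℂ := Complex.exp (θ * Complex.I) with hz
  have hzre : ∀ j : ℕ, (z ^ j).re = Real.cos (j * θ) := by
    intro j
    rw [hz, ← Complex.exp_nat_mul]
    have : (j : ℂ) * (θ * Complex.I) = ((j:ℝ) * θ : ℝ) * Complex.I := by push_cast; ring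
    rw [this, Complex.exp_ofReal_mul_I_re]
  have hzc : (2 : ℂ) * (Real.cos θ : ℂ) = z + z⁻¹ := by
    rw [Complex.ofReal_cos, Complex.cos, hz, neg_mul, Complex.exp_neg]
    ring
  have hz0 : z ≠ 0 := Complex.exp_ne_zero _
  have hkey : ((2:ℂ) * (Real.cos θ : ℂ)) ^ n * z ^ (n+2)
      = ∑ k ∈ Finset.range (n+1), (n.choose k : ℂ) * z ^ (2*(k+1)) := by
    rw [hzc]
    have : (z + z⁻¹) ^ n * z ^ (n + 2) = (z^2 + 1)^n * z^2 := by
      rw [show z ^ (n+2) = z^n * z^2 by ring, ← mul_assoc, ← mul_pow, add_mul, inv_mul_cancel₀ hz0]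
      ring
    rw [this, add_pow, Finset.sum_mul]
    apply Finset.sum_congr rfl
    intro k hk
    rw [one_pow]
    ring
  have h2 := congrArg Complex.re hkey
  rw [Complex.re_sum] at h2
  have hL : (((2:ℂ) * (Real.cos θ : ℂ)) ^ n * z ^ (n+2)).re = (2 * Real.cos θ)^n * Real.cos (((n:ℝ)+2)*θ) := by
    rw [show ((2:ℂ) * (Real.cos θ : ℂ)) ^ n = (((2 * Real.cos θ)^n : ℝ) : ℂ) by push_cast; ring]
    rw [Complex.re_ofReal_mul, hzre (n+2)]
    push_cast
    ring_nf
  rw [hL] at h2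
  calc (2:ℝ)^n * (Real.cos θ ^ n * Real.cos ((n + 2) * θ)) = (2 * Real.cos θ)^n * Real.cos (((n:ℝ)+2)*θ) := by
        rw [mul_pow]; ring
    _ = _ := by
        rw [h2]
        apply Finset.sum_congr rfl
        intro k hk
        rw [show ((n.choose k : ℂ)) = (((n.choose k : ℝ)) : ℂ) by push_cast; ring]
        rw [Complex.re_ofReal_mul, hzre (2*(k+1))]
        push_cast
        ring_nf

theorem stmt4 (n m : ℕ) (hm : 1 ≤ m) :
    ∫ θ in (0:ℝ)..(π / 2),
        Real.cos θ ^ n * Real.cos ((n + 2) * θ) * Real.cos (2 * m * θ) =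
      if (m : ℤ) - 2 < (n : ℤ) then π / 2 ^ (n + 2) * (n.choose (m - 1) : ℝ) else 0 := by
  have heq : ∀ θ : ℝ, Real.cos θ ^ n * Real.cos ((n + 2) * θ) * Real.cos (2 * m * θ)
      = ((2:ℝ)^n)⁻¹ * ∑ k ∈ Finset.range (n+1),
          (n.choose k : ℝ) * (Real.cos (2*(k+1)*θ) * Real.cos (2*m*θ)) := by
    intro θ
    have h3 := L3 n θ
    simp_rw [← mul_assoc, ← Finset.sum_mul, ← h3]
    field_simp
  simp_rw [heq]
  rw [intervalIntegral.integral_const_mul]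
  rw [intervalIntegral.integral_finset_sum (fun k _ => by
    apply Continuous.intervalIntegrable
    continuity)]
  have hsum : ∀ k ∈ Finset.range (n+1),
      (∫ θ in (0:ℝ)..(π/2), (n.choose k : ℝ) * (Real.cos (2*(k+1)*θ) * Real.cos (2*m*θ)))
        = if k = m - 1 then (n.choose k : ℝ) * (π/4) else 0 := by
    intro k hk
    rw [intervalIntegral.integral_const_mul]
    have : (∫ θ in (0:ℝ)..(π/2), Real.cos (2*(k+1)*θ) * Real.cos (2*m*θ))
        = if k + 1 = m then π/4 else 0 := by
      have := L2 (k+1) m (by omega) hm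
      push_cast at this ⊢
      exact this
    rw [this]
    have hcond : (k + 1 = m) ↔ (k = m - 1) := by omega
    by_cases h : k = m - 1
    · rw [if_pos (hcond.mpr h), if_pos h]
    · rw [if_neg (fun hh => h (hcond.mp hh)), if_neg h, mul_zero]
  rw [Finset.sum_congr rfl hsum, Finset.sum_ite_eq' (Finset.range (n+1)) (m-1) (fun k => (n.choose k : ℝ) * (π/4))]
  have hcond2 : (m - 1 ∈ Finset.range (n+1)) ↔ ((m : ℤ) - 2 < (n : ℤ)) := by
    simp only [Finset.mem_range]
    omega
  split_ifs with h1 h2 h2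
  · rw [pow_add]
    field_simp
    ring
  · exact absurd (hcond2.mp h1) h2
  · exact absurd (hcond2.mpr h2) h1
  · simp
end
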